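/- For every even integer j ≥ 0, every even integer a ≥ 2, and every odd integer b ≥ 1, the rooted tree RT(0^j, a, b) is super edge-graceful. -/

import Mathlib

/-- Edge type of the rooted tree `RT(a₀, …, a_{n-1})`: one edge from the root to each
child `i` (`Sum.inl i`), and one edge from child `i` to each of its `a i` leaf children
(`Sum.inr ⟨i, m⟩`).  The number of edges is `q = n + ∑ i, a i`. -/
abbrev RTEdge (n : ℕ) (a : Fin n → ℕ) := (Fin n) ⊕ (Σ i : Fin n, Fin (a i))

/-- Vertex type of the rooted tree `RT(a₀, …, a_{n-1})`: the root (`none`), the children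
`some (.inl i)` of the root, and the leaves `some (.inr ⟨i, m⟩)` attached to child `i`.
The number of vertices is `p = q + 1`. -/
abbrev RTVertex (n : ℕ) (a : Fin n → ℕ) := Option (RTEdge n a)

/-- The vertex labeling induced by an edge labeling `f`: each vertex gets the sum of the
labels of the edges incident with it. -/
def vertexSum {n : ℕ} (a : Fin n → ℕ) (f : RTEdge n a → ℤ) : RTVertex n a → ℤ
  | none => ∑ i : Fin n, f (Sum.inl i)
  | some (Sum.inl i) => f (Sum.inl i) + ∑ m : Fin (a i), f (Sum.inr ⟨i, m⟩)
  | some (Sum.inr ⟨i, m⟩) => f (Sum.inr ⟨i, m⟩)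

/-- The target label set for `q` objects: `{0, ±1, …, ±(q-1)/2}` if `q` is odd, and
`{±1, …, ±(q/2)}` if `q` is even. -/
noncomputable def segSet (q : ℕ) : Finset ℤ :=
  if q % 2 = 0 then (Finset.Icc (-((q / 2 : ℕ) : ℤ)) ((q / 2 : ℕ) : ℤ)).erase 0
  else Finset.Icc (-((q / 2 : ℕ) : ℤ)) ((q / 2 : ℕ) : ℤ)

/-- The rooted tree `RT(a₀, …, a_{n-1})` is super edge-graceful: there is an edge
labeling which is a bijection onto `{0, ±1, …, ±(q-1)/2}` (`q` odd) resp.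
`{±1, …, ±(q/2)}` (`q` even) whose induced vertex labeling is a bijection onto
`{0, ±1, …, ±(p-1)/2}` (`p` odd) resp. `{±1, …, ±(p/2)}` (`p` even), where
`q = n + ∑ i, a i` and `p = q + 1`. -/
def IsSEG {n : ℕ} (a : Fin n → ℕ) : Prop :=
  ∃ f : RTEdge n a → ℤ,
    Set.BijOn f Set.univ ↑(segSet (n + ∑ i, a i)) ∧
    Set.BijOn (vertexSum a f) Set.univ ↑(segSet (n + ∑ i, a i + 1))

/-- The sequence `(0^j, a, b)` of length `j + 2`. -/
def seq2 (j a b : ℕ) : Fin (j + 2) → ℕ :=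
  fun i => if (i : ℕ) < j then 0 else if (i : ℕ) = j then a else b

/-! With `q = 2K + 1` edges labelled `0, ±1, …, ±K`, put `0` and `-K` on the root edges of the
two inner children and choose the rest so that the root edges of the childless children sum to
`0` and the leaf edges below the two inner children sum to `K + 1` and `-1`. A pendant vertex
inherits the label of its edge, the root gets `-K`, and the inner children get `K + 1` and
`-(K + 1)`: the vertex labels are the edge labels with `0` traded for `±(K + 1)`, that is,
exactly `±1, …, ±(K + 1)`. -/

open Finset

lemma coe_segSet_two_mul_add_one (K : ℕ) :
    (segSet (2 * K + 1) : Set ℤ) = Set.Icc (-(K : ℤ)) K := by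
  rw [segSet, if_neg (by omega), show (2 * K + 1) / 2 = K by omega, coe_Icc]

lemma coe_segSet_two_mul_add_two (K : ℕ) :
    (segSet (2 * K + 1 + 1) : Set ℤ) = Set.Icc (-((K : ℤ) + 1)) (K + 1) \ {0} := by
  rw [segSet, if_pos (by omega), show (2 * K + 1 + 1) / 2 = K + 1 by omega, coe_erase, coe_Icc]
  push_cast
  rfl

lemma card_segSet (q : ℕ) : #(segSet q) = q := by
  unfold segSet
  split_ifs
  · rw [card_erase_of_mem (by rw [mem_Icc]; omega), Int.card_Icc]
    omega
  · rw [Int.card_Icc]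
    omega

lemma Set.bijOn_univ_of_injective {α β : Type*} [Fintype α] {f : α → β} {t : Finset β}
    (hmaps : ∀ x, f x ∈ t) (hinj : Function.Injective f) (hcard : #t ≤ Fintype.card α) :
    Set.BijOn f Set.univ t := by
  rw [← coe_univ]
  exact ⟨fun x _ => hmaps x, hinj.injOn,
    surjOn_of_injOn_of_card_le f (fun x _ => hmaps x) hinj.injOn hcard⟩

lemma Set.BijOn.option_of_relabel {E : Type*} {f : E → ℤ} {g : Option E → ℤ} {K : ℤ}
    {e₀ e₁ : E} (hf : Set.BijOn f Set.univ (Set.Icc (-K) K)) (hf₀ : f e₀ = 0) (hf₁ : f e₁ = -K)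
    (hnone : g none = -K) (hg₀ : g (some e₀) = K + 1) (hg₁ : g (some e₁) = -(K + 1))
    (hg : ∀ e, e ≠ e₀ → e ≠ e₁ → g (some e) = f e) :
    Set.BijOn g Set.univ (Set.Icc (-(K + 1)) (K + 1) \ {0}) := by
  have hne : e₀ ≠ e₁ := by
    rintro rfl
    omega
  have hK : 1 ≤ K := by
    have h₀ := hf.mapsTo (Set.mem_univ e₀)
    have hKne : K ≠ 0 := fun hK => hne (hf.injOn trivial trivial (by rw [hf₀, hf₁, hK, neg_zero]))
    rw [hf₀, Set.mem_Icc] at h₀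
    omega
  have hval : ∀ e, (e = e₀ ∧ g (some e) = K + 1) ∨ (e = e₁ ∧ g (some e) = -(K + 1)) ∨
      (e ≠ e₀ ∧ e ≠ e₁ ∧ g (some e) = f e ∧ -K < f e ∧ f e ≤ K ∧ f e ≠ 0) := by
    intro e
    by_cases h₀ : e = e₀
    · exact .inl ⟨h₀, h₀ ▸ hg₀⟩
    by_cases h₁ : e = e₁
    · exact .inr (.inl ⟨h₁, h₁ ▸ hg₁⟩)
    have hlo : -K ≤ f e ∧ f e ≤ K := hf.mapsTo trivial
    have hneg : f e ≠ -K := fun h => h₁ (hf.injOn trivial trivial (h.trans hf₁.symm))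
    have hzero : f e ≠ 0 := fun h => h₀ (hf.injOn trivial trivial (h.trans hf₀.symm))
    exact .inr (.inr ⟨h₀, h₁, hg e h₀ h₁, by omega, hlo.2, hzero⟩)
  refine ⟨?maps, ?inj, ?surj⟩
  case maps =>
    rintro (_ | e) -
    · simp only [hnone, Set.mem_sdiff, Set.mem_Icc, Set.mem_singleton_iff]
      omega
    simp only [Set.mem_sdiff, Set.mem_Icc, Set.mem_singleton_iff]
    rcases hval e with ⟨-, he⟩ | ⟨-, he⟩ | ⟨-, -, he, he'⟩ <;> omega
  case inj =>
    rintro (_ | x) - (_ | y) - h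
    · rfl
    · rcases hval y with ⟨-, hy⟩ | ⟨-, hy⟩ | ⟨-, -, hy, hy'⟩ <;> omega
    · rcases hval x with ⟨-, hx⟩ | ⟨-, hx⟩ | ⟨-, -, hx, hx'⟩ <;> omega
    rcases hval x with ⟨rfl, hx⟩ | ⟨rfl, hx⟩ | ⟨-, -, hx, hx'⟩ <;>
      rcases hval y with ⟨rfl, hy⟩ | ⟨rfl, hy⟩ | ⟨-, -, hy, hy'⟩ <;>
      first
        | rfl
        | omega
        | exact congrArg some (hf.injOn trivial trivial (by rw [← hx, ← hy, h]))
  case surj =>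
    intro y ⟨⟨hlo, hhi⟩, hy⟩
    rw [Set.mem_singleton_iff] at hy
    by_cases hy₀ : y = K + 1
    · exact ⟨some e₀, trivial, hg₀.trans hy₀.symm⟩
    by_cases hy₁ : y = -(K + 1)
    · exact ⟨some e₁, trivial, hg₁.trans hy₁.symm⟩
    by_cases hyK : y = -K
    · exact ⟨none, trivial, hnone.trans hyK.symm⟩
    obtain ⟨e, -, rfl⟩ := hf.surjOn (show y ∈ Set.Icc (-K) K by constructor <;> omega)
    have h₀ : e ≠ e₀ := by rintro rfl; exact hy hf₀
    have h₁ : e ≠ e₁ := by rintro rfl; exact hyK hf₁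
    exact ⟨some e, trivial, hg e h₀ h₁⟩

lemma card_rtEdge {n : ℕ} (a : Fin n → ℕ) : Fintype.card (RTEdge n a) = n + ∑ i, a i := by
  simp [Fintype.card_sigma]

def zigzag (c m : ℕ) : ℤ := if m % 2 = 0 then ((c + m / 2 : ℕ) : ℤ) else -((c + m / 2 : ℕ) : ℤ)

lemma sum_zigzag_range_two_mul (c r : ℕ) : ∑ m ∈ range (2 * r), zigzag c m = 0 := by
  induction r with
  | zero => simp
  | succ r ih =>
    rw [mul_add_one, sum_range_succ, sum_range_succ, ih, zigzag, zigzag,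
      if_pos (by omega), if_neg (by omega), show (2 * r + 1) / 2 = 2 * r / 2 by omega]
    ring

section RootedTree

variable {j a b : ℕ}

lemma sum_seq2 : ∑ i, seq2 j a b i = a + b := by
  unfold seq2
  rw [Fin.sum_univ_eq_sum_range (fun i => if i < j then 0 else if i = j then a else b),
    sum_range_succ, sum_range_succ, sum_eq_zero fun i hi => if_pos (mem_range.mp hi)]
  simp

lemma of_lt_seq2 {i : Fin (j + 2)} {m : ℕ} (hm : m < seq2 j a b i) :
    ((i : ℕ) = j ∧ m < a) ∨ ((i : ℕ) = j + 1 ∧ m < b) := by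
  have := i.isLt
  simp only [seq2] at hm
  split_ifs at hm <;> omega

def maxLabel (j a b : ℕ) : ℕ := (j + a + b + 1) / 2

lemma add_two_add_sum_seq2 (hj : Even j) (ha : Even a) (hb : Odd b) :
    j + 2 + ∑ i, seq2 j a b i = 2 * maxLabel j a b + 1 := by
  rw [sum_seq2, maxLabel]
  have := Nat.even_iff.mp hj
  have := Nat.even_iff.mp ha
  have := Nat.odd_iff.mp hb
  omega

/- With `K = maxLabel j a b` and `q = 2K + 1` edges, the paired labels `±2, …, ±(K - 1)` are dealt
out in consecutive runs: `±2, …, ±(j/2 + 1)` to the root edges of the `j` childless children,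
the next `(b - 1)/2` pairs to the leaves of the last child, the remaining `(a - 2)/2` pairs to
the leaves of child `j`. The unpaired labels go to the other five edges: `0` and `-K` to the
root edges of children `j` and `j + 1`, `K` and `1` to two leaves of child `j`, and `-1` to a
leaf of the last child. -/

def rootEdgeLabel (j a b i : ℕ) : ℤ :=
  if i < j then zigzag 2 i else if i = j then 0 else -(maxLabel j a b : ℤ)

def leafEdgeLabel (j a b i m : ℕ) : ℤ :=
  if i = j then
    if m = 0 then maxLabel j a b else if m = 1 then 1 else zigzag (j / 2 + (b + 1) / 2 + 1) (m - 2)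
  else if m = 0 then -1 else zigzag (j / 2 + 2) (m - 1)

def edgeLabel (j a b : ℕ) : RTEdge (j + 2) (seq2 j a b) → ℤ
  | .inl i => rootEdgeLabel j a b i
  | .inr ⟨i, m⟩ => leafEdgeLabel j a b i m

lemma edgeLabel_mem_Icc (hj : Even j) (ha : Even a) (ha2 : 2 ≤ a) (hb : Odd b)
    (e : RTEdge (j + 2) (seq2 j a b)) :
    edgeLabel j a b e ∈ Set.Icc (-(maxLabel j a b : ℤ)) (maxLabel j a b) := by
  have := Nat.even_iff.mp hj
  have := Nat.even_iff.mp ha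
  have := Nat.odd_iff.mp hb
  rw [Set.mem_Icc]
  rcases e with i | ⟨i, m⟩
  · have := i.isLt
    simp only [edgeLabel, rootEdgeLabel, zigzag, maxLabel]
    split_ifs <;> omega
  · rcases of_lt_seq2 m.isLt with ⟨hi, hm⟩ | ⟨hi, hm⟩ <;>
    · simp only [edgeLabel, leafEdgeLabel, zigzag, maxLabel]
      split_ifs <;> omega

lemma rootEdgeLabel_injOn (hj : Even j) (ha : Even a) (ha2 : 2 ≤ a) (hb : Odd b) {i i' : ℕ}
    (hi : i < j + 2) (hi' : i' < j + 2) (h : rootEdgeLabel j a b i = rootEdgeLabel j a b i') :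
    i = i' := by
  have := Nat.even_iff.mp hj
  have := Nat.even_iff.mp ha
  have := Nat.odd_iff.mp hb
  simp only [rootEdgeLabel, zigzag, maxLabel] at h
  split_ifs at h <;> omega

lemma leafEdgeLabel_injOn (hj : Even j) (ha : Even a) (hb : Odd b) {i i' m m' : ℕ}
    (hm : (i = j ∧ m < a) ∨ (i = j + 1 ∧ m < b)) (hm' : (i' = j ∧ m' < a) ∨ (i' = j + 1 ∧ m' < b))
    (h : leafEdgeLabel j a b i m = leafEdgeLabel j a b i' m') : i = i' ∧ m = m' := by
  have := Nat.even_iff.mp hj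
  have := Nat.even_iff.mp ha
  have := Nat.odd_iff.mp hb
  simp only [leafEdgeLabel, zigzag, maxLabel] at h
  split_ifs at h <;> omega

lemma rootEdgeLabel_ne_leafEdgeLabel (hj : Even j) (ha : Even a) (ha2 : 2 ≤ a) (hb : Odd b)
    {i i' m : ℕ} (hi : i < j + 2) (hm : (i' = j ∧ m < a) ∨ (i' = j + 1 ∧ m < b)) :
    rootEdgeLabel j a b i ≠ leafEdgeLabel j a b i' m := by
  have := Nat.even_iff.mp hj
  have := Nat.even_iff.mp ha
  have := Nat.odd_iff.mp hb
  simp only [rootEdgeLabel, leafEdgeLabel, zigzag, maxLabel]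
  split_ifs <;> omega

lemma edgeLabel_injective (hj : Even j) (ha : Even a) (ha2 : 2 ≤ a) (hb : Odd b) :
    Function.Injective (edgeLabel j a b) := by
  rintro (i | ⟨i, m⟩) (i' | ⟨i', m'⟩) h
  · exact congrArg Sum.inl (Fin.ext (rootEdgeLabel_injOn hj ha ha2 hb i.isLt i'.isLt h))
  · exact absurd h (rootEdgeLabel_ne_leafEdgeLabel hj ha ha2 hb i.isLt (of_lt_seq2 m'.isLt))
  · exact absurd h.symm (rootEdgeLabel_ne_leafEdgeLabel hj ha ha2 hb i'.isLt (of_lt_seq2 m.isLt))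
  · obtain ⟨hi, hm⟩ := leafEdgeLabel_injOn hj ha hb (of_lt_seq2 m.isLt) (of_lt_seq2 m'.isLt) h
    obtain rfl : i = i' := Fin.ext hi
    obtain rfl : m = m' := Fin.ext hm
    rfl

lemma edgeLabel_bijOn (hj : Even j) (ha : Even a) (ha2 : 2 ≤ a) (hb : Odd b) :
    Set.BijOn (edgeLabel j a b) Set.univ (Set.Icc (-(maxLabel j a b : ℤ)) (maxLabel j a b)) := by
  rw [← coe_segSet_two_mul_add_one]
  refine Set.bijOn_univ_of_injective (fun e => ?_) (edgeLabel_injective hj ha ha2 hb) ?_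
  · rw [← mem_coe, coe_segSet_two_mul_add_one]
    exact edgeLabel_mem_Icc hj ha ha2 hb e
  · rw [card_segSet, card_rtEdge, add_two_add_sum_seq2 hj ha hb]

lemma vertexSum_none (hj : Even j) :
    vertexSum (seq2 j a b) (edgeLabel j a b) none = -(maxLabel j a b : ℤ) := by
  change ∑ i : Fin (j + 2), rootEdgeLabel j a b i = _
  obtain ⟨r, rfl⟩ := hj
  rw [Fin.sum_univ_eq_sum_range (rootEdgeLabel (r + r) a b), sum_range_succ, sum_range_succ,
    sum_congr rfl fun i hi => show rootEdgeLabel (r + r) a b i = zigzag 2 i from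
      if_pos (mem_range.mp hi), ← two_mul, sum_zigzag_range_two_mul]
  simp [rootEdgeLabel]

lemma vertexSum_some_inl_self (ha : Even a) (ha2 : 2 ≤ a) :
    vertexSum (seq2 j a b) (edgeLabel j a b) (some (.inl ⟨j, by omega⟩)) = maxLabel j a b + 1 := by
  change rootEdgeLabel j a b j + ∑ m : Fin (seq2 j a b ⟨j, _⟩), leafEdgeLabel j a b j m = _
  rw [Fin.sum_univ_eq_sum_range (leafEdgeLabel j a b j), show seq2 j a b ⟨j, _⟩ = a by simp [seq2]]
  obtain ⟨r, rfl⟩ : ∃ r, a = 2 * r + 2 := ⟨a / 2 - 1, by have := Nat.even_iff.mp ha; omega⟩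
  rw [sum_range_succ', sum_range_succ']
  simp only [rootEdgeLabel, leafEdgeLabel, lt_self_iff_false, ↓reduceIte, Nat.add_eq_zero_iff,
    one_ne_zero, and_false, Nat.add_eq_right, Nat.reduceSubDiff, sum_zigzag_range_two_mul]
  ring

lemma vertexSum_some_inl_last (hb : Odd b) :
    vertexSum (seq2 j a b) (edgeLabel j a b) (some (.inl ⟨j + 1, by omega⟩)) =
      -(maxLabel j a b + 1 : ℤ) := by
  change rootEdgeLabel j a b (j + 1) + ∑ m : Fin (seq2 j a b ⟨j + 1, _⟩),
    leafEdgeLabel j a b (j + 1) m = _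
  rw [Fin.sum_univ_eq_sum_range (leafEdgeLabel j a b (j + 1)),
    show seq2 j a b ⟨j + 1, _⟩ = b by simp [seq2]]
  obtain ⟨r, rfl⟩ := hb
  rw [sum_range_succ']
  simp [rootEdgeLabel, leafEdgeLabel, sum_zigzag_range_two_mul, add_comm]

lemma vertexSum_some_of_ne {e : RTEdge (j + 2) (seq2 j a b)} (he₀ : e ≠ .inl ⟨j, by omega⟩)
    (he₁ : e ≠ .inl ⟨j + 1, by omega⟩) :
    vertexSum (seq2 j a b) (edgeLabel j a b) (some e) = edgeLabel j a b e := by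
  rcases e with i | ⟨i, m⟩
  · have hi : (i : ℕ) < j := by
      have := i.isLt
      have : (i : ℕ) ≠ j := fun h => he₀ (congrArg _ (Fin.ext h))
      have : (i : ℕ) ≠ j + 1 := fun h => he₁ (congrArg _ (Fin.ext h))
      omega
    change rootEdgeLabel j a b i + ∑ m : Fin (seq2 j a b i), leafEdgeLabel j a b i m = _
    rw [Fin.sum_univ_eq_sum_range (leafEdgeLabel j a b i), show seq2 j a b i = 0 from if_pos hi,
      sum_range_zero, add_zero]
    rfl
  · rfl

end RootedTree

theorem stmt3_general (j a b : ℕ) (hj : Even j) (ha : Even a) (ha2 : 2 ≤ a)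
    (hb : Odd b) : IsSEG (seq2 j a b) := by
  refine ⟨edgeLabel j a b, ?_, ?_⟩
  · rw [add_two_add_sum_seq2 hj ha hb, coe_segSet_two_mul_add_one]
    exact edgeLabel_bijOn hj ha ha2 hb
  · rw [add_two_add_sum_seq2 hj ha hb, coe_segSet_two_mul_add_two]
    exact (edgeLabel_bijOn hj ha ha2 hb).option_of_relabel (by simp [edgeLabel, rootEdgeLabel])
      (by simp [edgeLabel, rootEdgeLabel]) (vertexSum_none hj) (vertexSum_some_inl_self ha ha2)
      (vertexSum_some_inl_last hb) fun e he₀ he₁ => vertexSum_some_of_ne he₀ he₁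

/-- For every even integer `j ≥ 0`, every even integer `a ≥ 2`, and every odd integer
`b ≥ 1`, the rooted tree `RT(0^j, a, b)` is super edge-graceful. -/
theorem stmt3 (j a b : ℕ) (hj : Even j) (ha : Even a) (ha2 : 2 ≤ a)
    (hb : Odd b) (hb1 : 1 ≤ b) : IsSEG (seq2 j a b) :=
  stmt3_general j a b hj ha ha2 hb
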